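/- For a square laptop (L = 1) on a table with sides at least 1, the minimum footprint area 1/4 is attained exactly when the center of the laptop is at a corner of the table, for every orientation. -/

import Mathlib

open Real MeasureTheory

/-- The unit square centered at `c`, rotated by `θ`. -/
def unitSquare (c : ℝ × ℝ) (θ : ℝ) : Set (ℝ × ℝ) :=
  {p | |Real.cos θ * (p.1 - c.1) + Real.sin θ * (p.2 - c.2)| ≤ 1 / 2 ∧
       |(-Real.sin θ) * (p.1 - c.1) + Real.cos θ * (p.2 - c.2)| ≤ 1 / 2}

/-!
A quarter turn about its centre maps the laptop onto itself, so each of the four open quadrants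
at the centre meets it in area `1/4`; at a corner of the table the footprint is exactly such a
piece. Reflections in the midlines of the table and the swap of the coordinates reduce to
`0 ≤ p.2 ≤ p.1 ≤ a/2`, `p.2 ≤ b/2`. If `p.2 ≤ 1 - √2/2`, the north-east quarter of the laptop
can only overhang the right edge of the table, and a quarter turn puts the overhang back on the
table north-west of the centre; so the footprint keeps area `1/4`, and away from the corner a small
box next to the centre adds positive area. If `p.2 > 1 - √2/2`, the axis-parallel square of
half-side `1 - √2/2 < √2/4` about the centre lies in the inscribed disc of the laptop and on the
table, and already has area more than `1/4`.
-/

open Set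
open scoped ENNReal

section

variable {p z : ℝ × ℝ} {θ : ℝ}

lemma sq_add_sq_le_of_mem_unitSquare (hz : z ∈ unitSquare p θ) :
    (z.1 - p.1) ^ 2 + (z.2 - p.2) ^ 2 ≤ 1 / 2 := by
  obtain ⟨h₁, h₂⟩ := hz
  have hrot : (z.1 - p.1) ^ 2 + (z.2 - p.2) ^ 2
      = (cos θ * (z.1 - p.1) + sin θ * (z.2 - p.2)) ^ 2
        + (-sin θ * (z.1 - p.1) + cos θ * (z.2 - p.2)) ^ 2 := by
    linear_combination (-(z.1 - p.1) ^ 2 - (z.2 - p.2) ^ 2) * sin_sq_add_cos_sq θ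
  rw [hrot]
  nlinarith [sq_le_sq' (abs_le.1 h₁).1 (abs_le.1 h₁).2, sq_le_sq' (abs_le.1 h₂).1 (abs_le.1 h₂).2]

lemma abs_cos_add_abs_sin_le_sqrt_two (θ : ℝ) : |cos θ| + |sin θ| ≤ √2 := by
  apply Real.le_sqrt_of_sq_le
  nlinarith [sin_sq_add_cos_sq θ, sq_abs (sin θ), sq_abs (cos θ),
    sq_nonneg (|cos θ| - |sin θ|)]

lemma abs_mul_add_mul_le_half {c s u v r : ℝ} (hcs : |c| + |s| ≤ √2) (hu : |u| ≤ r) (hv : |v| ≤ r)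
    (hr : r ≤ √2 / 4) : |c * u + s * v| ≤ 1 / 2 := by
  have h2 : √2 * √2 = 2 := Real.mul_self_sqrt zero_le_two
  calc |c * u + s * v| ≤ |c| * |u| + |s| * |v| := by
        rw [← abs_mul, ← abs_mul]; exact abs_add_le _ _
    _ ≤ (|c| + |s|) * r := by
        nlinarith [abs_nonneg c, abs_nonneg s]
    _ ≤ √2 * (√2 / 4) := by
        gcongr
        exact (abs_nonneg u).trans hu
    _ = 1 / 2 := by rw [mul_div_assoc', h2]; norm_num

lemma Icc_prod_Icc_subset_unitSquare {r : ℝ} (hr : r ≤ √2 / 4) :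
    Icc (p.1 - r) (p.1 + r) ×ˢ Icc (p.2 - r) (p.2 + r) ⊆ unitSquare p θ := by
  rintro z ⟨⟨hx₁, hx₂⟩, hy₁, hy₂⟩
  have hu : |z.1 - p.1| ≤ r := abs_le.2 ⟨by linarith, by linarith⟩
  have hv : |z.2 - p.2| ≤ r := abs_le.2 ⟨by linarith, by linarith⟩
  have hcs := abs_cos_add_abs_sin_le_sqrt_two θ
  exact ⟨abs_mul_add_mul_le_half hcs hu hv hr,
    abs_mul_add_mul_le_half (by rwa [abs_neg, add_comm]) hu hv hr⟩

def quarterTurn (p z : ℝ × ℝ) : ℝ × ℝ := (p.1 + (z.2 - p.2), p.2 - (z.1 - p.1))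

lemma preimage_quarterTurn_unitSquare (p : ℝ × ℝ) (θ : ℝ) :
    quarterTurn p ⁻¹' unitSquare p θ = unitSquare p θ := by
  ext z
  simp only [unitSquare, quarterTurn, mem_preimage, mem_ofPred_eq, add_sub_cancel_left,
    sub_sub_cancel_left]
  rw [and_comm]
  congr! 2
  · rw [← abs_neg]; ring_nf
  · ring_nf

end

lemma volume_preimage_affine (g : ℝ × ℝ → ℝ × ℝ) (m₁₁ m₁₂ m₂₁ m₂₂ : ℝ) (v : ℝ × ℝ)
    (hg : ∀ z, g z = (m₁₁ * z.1 + m₁₂ * z.2 + v.1, m₂₁ * z.1 + m₂₂ * z.2 + v.2))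
    (hdet : |m₁₁ * m₂₂ - m₁₂ * m₂₁| = 1) (s : Set (ℝ × ℝ)) :
    volume (g ⁻¹' s) = volume s := by
  set L := Matrix.toLin (Module.Basis.finTwoProd ℝ) (Module.Basis.finTwoProd ℝ)
    !![m₁₁, m₁₂; m₂₁, m₂₂]
  have hL : LinearMap.det L = m₁₁ * m₂₂ - m₁₂ * m₂₁ := by
    rw [LinearMap.det_toLin, Matrix.det_fin_two_of]
  have hdet₀ : LinearMap.det L ≠ 0 := by
    rw [hL]; intro h; rw [h, abs_zero] at hdet; exact zero_ne_one hdet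
  have hgL : g = (· + v) ∘ L := by
    funext z
    simp [hg, L, Matrix.toLin_finTwoProd_apply, Prod.ext_iff]
  rw [hgL, preimage_comp, Measure.addHaar_preimage_linearMap volume hdet₀,
    measure_preimage_add_right, abs_inv, hL, hdet, inv_one, ENNReal.ofReal_one, one_mul]

lemma measurableSet_unitSquare (p : ℝ × ℝ) (θ : ℝ) : MeasurableSet (unitSquare p θ) := by
  rw [unitSquare, ofPred_and]
  exact (measurableSet_le (by fun_prop) measurable_const).inter
    (measurableSet_le (by fun_prop) measurable_const)

lemma volume_Icc_prod_Icc (x₁ x₂ y₁ y₂ : ℝ) :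
    volume (Icc x₁ x₂ ×ˢ Icc y₁ y₂) = ENNReal.ofReal (x₂ - x₁) * ENNReal.ofReal (y₂ - y₁) := by
  rw [Measure.volume_eq_prod, Measure.prod_prod, Real.volume_Icc, Real.volume_Icc]

lemma volume_unitSquare (p : ℝ × ℝ) (θ : ℝ) : volume (unitSquare p θ) = 1 := by
  have hS : unitSquare p θ = (fun z : ℝ × ℝ =>
      (cos θ * z.1 + sin θ * z.2 + (-cos θ * p.1 - sin θ * p.2),
       -sin θ * z.1 + cos θ * z.2 + (sin θ * p.1 - cos θ * p.2)))
      ⁻¹' (Icc (-(1 / 2)) (1 / 2) ×ˢ Icc (-(1 / 2)) (1 / 2)) := by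
    ext z
    simp only [unitSquare, mem_ofPred_eq, mem_preimage, mem_prod, mem_Icc, ← abs_le]
    ring_nf
  rw [hS, volume_preimage_affine _ _ _ _ _ (-cos θ * p.1 - sin θ * p.2, sin θ * p.1 - cos θ * p.2)
    (fun _ => rfl) (by rw [show cos θ * cos θ - sin θ * -sin θ = 1 by
      linear_combination cos_sq_add_sin_sq θ, abs_one]), volume_Icc_prod_Icc]
  norm_num

lemma volume_quarterTurn_preimage (p : ℝ × ℝ) (s : Set (ℝ × ℝ)) :
    volume (quarterTurn p ⁻¹' s) = volume s :=
  volume_preimage_affine _ 0 1 (-1) 0 (p.1 - p.2, p.1 + p.2)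
    (fun z => by simp only [quarterTurn]; ext <;> ring) (by norm_num) s

lemma measurable_quarterTurn (p : ℝ × ℝ) : Measurable (quarterTurn p) := by
  unfold quarterTurn; fun_prop

lemma volume_unitSquare_inter_quadrant (p : ℝ × ℝ) (θ : ℝ) :
    volume (unitSquare p θ ∩ Ioi p.1 ×ˢ Ioi p.2) = 1 / 4 := by
  set μ := volume.restrict (unitSquare p θ)
  have hμ : ∀ s, μ s = volume (unitSquare p θ ∩ s) := fun s => by
    rw [Measure.restrict_apply' (measurableSet_unitSquare p θ), inter_comm]
  have hturn : ∀ s, μ (quarterTurn p ⁻¹' s) = μ s := fun s => by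
    rw [hμ, hμ, ← volume_quarterTurn_preimage p (unitSquare p θ ∩ s), preimage_inter,
      preimage_quarterTurn_unitSquare]
  have hquadrants : quarterTurn p ⁻¹' (Ioi p.1 ×ˢ Ioi p.2) = Iio p.1 ×ˢ Ioi p.2 ∧
      quarterTurn p ⁻¹' (Iio p.1 ×ˢ Ioi p.2) = Iio p.1 ×ˢ Iio p.2 ∧
      quarterTurn p ⁻¹' (Iio p.1 ×ˢ Iio p.2) = Ioi p.1 ×ˢ Iio p.2 := by
    refine ⟨?_, ?_, ?_⟩ <;> ext z <;>
      simp only [quarterTurn, mem_preimage, mem_prod, mem_Ioi, mem_Iio] <;>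
      constructor <;> rintro ⟨h₁, h₂⟩ <;> constructor <;> linarith
  obtain ⟨h₁, h₂, h₃⟩ := hquadrants
  have hcross : μ ({p.1}ᶜ ×ˢ {p.2}ᶜ)ᶜ = 0 := by
    refine nonpos_iff_eq_zero.1 ((Measure.restrict_apply_le _ _).trans_eq ?_)
    rw [Measure.volume_eq_prod]
    exact Measure.measure_prod_compl_eq_zero (by simp) (by simp)
  have hsplit : μ univ = μ (Iio p.1 ×ˢ Iio p.2) + μ (Iio p.1 ×ˢ Ioi p.2)
      + (μ (Ioi p.1 ×ˢ Iio p.2) + μ (Ioi p.1 ×ˢ Ioi p.2)) := by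
    rw [← measure_congr (ae_eq_univ.2 hcross), ← Iio_union_Ioi, ← Iio_union_Ioi, union_prod,
      measure_union (disjoint_prod.2 (Or.inl Iio_disjoint_Ioi_same)) (by measurability),
      prod_union, prod_union,
      measure_union (disjoint_prod.2 (Or.inr Iio_disjoint_Ioi_same)) (by measurability),
      measure_union (disjoint_prod.2 (Or.inr Iio_disjoint_Ioi_same)) (by measurability)]
  have e₁ : μ (Iio p.1 ×ˢ Ioi p.2) = μ (Ioi p.1 ×ˢ Ioi p.2) := by rw [← h₁, hturn]
  have e₂ : μ (Iio p.1 ×ˢ Iio p.2) = μ (Ioi p.1 ×ˢ Ioi p.2) := by rw [← h₂, hturn, e₁]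
  have e₃ : μ (Ioi p.1 ×ˢ Iio p.2) = μ (Ioi p.1 ×ˢ Ioi p.2) := by rw [← h₃, hturn, e₂]
  rw [Measure.restrict_apply_univ, volume_unitSquare, e₁, e₂, e₃] at hsplit
  rw [← hμ, ENNReal.eq_div_iff (by norm_num) (by norm_num), hsplit]
  ring

lemma volume_unitSquare_inter_Ici_prod_Ici (p : ℝ × ℝ) (θ : ℝ) :
    volume (unitSquare p θ ∩ Ici p.1 ×ˢ Ici p.2) = 1 / 4 := by
  rw [← volume_unitSquare_inter_quadrant p θ]
  refine measure_congr ((ae_eq_refl _).inter ?_)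
  rw [Measure.volume_eq_prod]
  exact (Measure.set_prod_ae_eq Ioi_ae_eq_Ici Ioi_ae_eq_Ici).symm

noncomputable def footprint (a b : ℝ) (p : ℝ × ℝ) (θ : ℝ) : ℝ≥0∞ :=
  volume (unitSquare p θ ∩ Icc 0 a ×ˢ Icc 0 b)

lemma footprint_reflect_fst (a b x y θ : ℝ) :
    footprint a b (a - x, y) (π - θ) = footprint a b (x, y) θ := by
  rw [footprint, footprint, ← volume_preimage_affine (fun z => (a - z.1, z.2)) (-1) 0 0 1 (a, 0)
    (fun z => by ext <;> dsimp <;> ring) (by norm_num)]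
  congr 1
  ext z
  simp only [unitSquare, mem_inter_iff, mem_preimage, mem_ofPred_eq, mem_prod, mem_Icc, abs_le,
    cos_pi_sub, sin_pi_sub]
  constructor <;> rintro ⟨⟨⟨h₁, h₂⟩, h₃, h₄⟩, ⟨h₅, h₆⟩, h₇, h₈⟩ <;>
    refine ⟨⟨⟨?_, ?_⟩, ?_, ?_⟩, ⟨?_, ?_⟩, ?_, ?_⟩ <;> linarith

lemma footprint_reflect_snd (a b x y θ : ℝ) :
    footprint a b (x, b - y) (-θ) = footprint a b (x, y) θ := by
  rw [footprint, footprint, ← volume_preimage_affine (fun z => (z.1, b - z.2)) 1 0 0 (-1) (0, b)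
    (fun z => by ext <;> dsimp <;> ring) (by norm_num)]
  congr 1
  ext z
  simp only [unitSquare, mem_inter_iff, mem_preimage, mem_ofPred_eq, mem_prod, mem_Icc, abs_le,
    cos_neg, sin_neg]
  constructor <;> rintro ⟨⟨⟨h₁, h₂⟩, h₃, h₄⟩, ⟨h₅, h₆⟩, h₇, h₈⟩ <;>
    refine ⟨⟨⟨?_, ?_⟩, ?_, ?_⟩, ⟨?_, ?_⟩, ?_, ?_⟩ <;> linarith

lemma footprint_swap (a b x y θ : ℝ) :
    footprint b a (y, x) (π / 2 - θ) = footprint a b (x, y) θ := by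
  rw [footprint, footprint, ← volume_preimage_affine Prod.swap 0 1 1 0 0
    (fun z => by ext <;> dsimp <;> ring) (by norm_num)]
  congr 1
  ext z
  simp only [unitSquare, mem_inter_iff, mem_preimage, mem_ofPred_eq, mem_prod, mem_Icc, abs_le,
    cos_pi_div_two_sub, sin_pi_div_two_sub, Prod.fst_swap, Prod.snd_swap]
  constructor <;> rintro ⟨⟨⟨h₁, h₂⟩, h₃, h₄⟩, ⟨h₅, h₆⟩, h₇, h₈⟩ <;>
    refine ⟨⟨⟨?_, ?_⟩, ?_, ?_⟩, ⟨?_, ?_⟩, ?_, ?_⟩ <;> linarith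

section

variable {a b : ℝ} {p z : ℝ × ℝ} {θ : ℝ}

lemma le_sqrt_two_div_two_of_sq_le {t : ℝ} (ht : t ^ 2 ≤ 1 / 2) : t ≤ √2 / 2 := by
  nlinarith [Real.sq_sqrt zero_le_two, Real.sqrt_nonneg 2]

lemma mem_table_of_quarterTurn_mem_quadrant_diff (ha : 1 ≤ a) (hb : 1 ≤ b) (hx₀ : 0 ≤ p.1)
    (hx : p.1 ≤ a / 2) (hy₀ : 0 ≤ p.2) (hy : p.2 ≤ 1 - √2 / 2)
    (hz : quarterTurn p z ∈ (unitSquare p θ ∩ Ioi p.1 ×ˢ Ioi p.2) \ Icc 0 a ×ˢ Icc 0 b) :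
    z ∈ Icc 0 a ×ˢ Icc 0 b ∧ z.1 < p.1 ∧ p.2 + 1 / 2 < z.2 := by
  obtain ⟨⟨hS, hs, ht⟩, hT⟩ := hz
  have hdisk := sq_add_sq_le_of_mem_unitSquare hS
  simp only [quarterTurn, add_sub_cancel_left, sub_sub_cancel_left, mem_Ioi, mem_prod, mem_Icc]
    at hdisk hs ht hT
  have hs' := le_sqrt_two_div_two_of_sq_le (t := z.2 - p.2) (by nlinarith)
  have ht' := le_sqrt_two_div_two_of_sq_le (t := p.1 - z.1) (by nlinarith)
  have hsa : a < p.1 + (z.2 - p.2) := by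
    by_contra! h
    exact hT ⟨⟨by linarith, h⟩, by linarith, by linarith⟩
  -- otherwise `quarterTurn p z` would be at squared distance `> (a - p.1)^2 + p.1^2 ≥ 1/2` from `p`
  have htx : p.1 - z.1 ≤ p.1 := by
    by_contra! h
    nlinarith
  exact ⟨⟨⟨by linarith, by linarith⟩, by linarith, by linarith⟩, by linarith, by linarith⟩

lemma quarter_add_volume_le_footprint (ha : 1 ≤ a) (hb : 1 ≤ b) (hx₀ : 0 ≤ p.1)
    (hx : p.1 ≤ a / 2) (hy₀ : 0 ≤ p.2) (hy : p.2 ≤ 1 - √2 / 2) :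
    1 / 4 + volume ((unitSquare p θ ∩ Icc 0 a ×ˢ Icc 0 b) \
      (Ioi p.1 ×ˢ Ioi p.2 ∪ {z | p.2 + 1 / 2 < z.2})) ≤ footprint a b p θ := by
  set S := unitSquare p θ
  set T : Set (ℝ × ℝ) := Icc 0 a ×ˢ Icc 0 b
  set Q : Set (ℝ × ℝ) := Ioi p.1 ×ˢ Ioi p.2
  set W := (S ∩ T) \ (Q ∪ {z | p.2 + 1 / 2 < z.2})
  set F := quarterTurn p ⁻¹' ((S ∩ Q) \ T)
  have hS : MeasurableSet S := measurableSet_unitSquare p θ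
  have hT : MeasurableSet T := measurableSet_Icc.prod measurableSet_Icc
  have hQ : MeasurableSet Q := measurableSet_Ioi.prod measurableSet_Ioi
  have hF : ∀ z ∈ F, z ∈ S ∩ T ∧ z.1 < p.1 ∧ p.2 + 1 / 2 < z.2 := fun z hz =>
    have h := mem_table_of_quarterTurn_mem_quadrant_diff ha hb hx₀ hx hy₀ hy hz
    ⟨⟨(preimage_quarterTurn_unitSquare p θ).subset hz.1.1, h.1⟩, h.2⟩
  have hquarter : volume (S ∩ Q ∩ T) + volume F = 1 / 4 := by
    rw [volume_quarterTurn_preimage, measure_inter_add_sdiff _ hT,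
      volume_unitSquare_inter_quadrant]
  have hdisj₁ : Disjoint (S ∩ Q ∩ T) F := by
    refine disjoint_left.2 fun z hz hzF => ?_
    linarith [hz.1.2.1.out, (hF z hzF).2.1]
  have hdisj₂ : Disjoint (S ∩ Q ∩ T ∪ F) W := by
    refine disjoint_left.2 fun z hz hzW => hzW.2 ?_
    rcases hz with hz | hz
    · exact Or.inl hz.1.2
    · exact Or.inr (hF z hz).2.2
  have hsub : S ∩ Q ∩ T ∪ F ∪ W ⊆ S ∩ T :=
    union_subset (union_subset (fun z hz => ⟨hz.1.1, hz.2⟩) fun z hz => (hF z hz).1)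
      sdiff_subset
  calc 1 / 4 + volume W = volume (S ∩ Q ∩ T ∪ F ∪ W) := by
        rw [measure_union hdisj₂ ((hS.inter hT).diff (hQ.union (measurableSet_lt
          measurable_const measurable_snd))), measure_union hdisj₁
          (measurable_quarterTurn p ((hS.inter hQ).diff hT)), hquarter]
    _ ≤ footprint a b p θ := measure_mono hsub

lemma volume_Icc_prod_Icc_pos {x₁ x₂ y₁ y₂ : ℝ} (hx : x₁ < x₂) (hy : y₁ < y₂) :
    0 < volume (Icc x₁ x₂ ×ˢ Icc y₁ y₂) := by
  rw [volume_Icc_prod_Icc]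
  exact ENNReal.mul_pos (ENNReal.ofReal_pos.2 (sub_pos.2 hx)).ne'
    (ENNReal.ofReal_pos.2 (sub_pos.2 hy)).ne'

lemma quarter_lt_footprint_of_near_bottom (ha : 1 ≤ a) (hb : 1 ≤ b) (hx₀ : 0 ≤ p.1)
    (hx : p.1 ≤ a / 2) (hy₀ : 0 ≤ p.2) (hy : p.2 ≤ 1 - √2 / 2) (hp : p ≠ 0) :
    1 / 4 < footprint a b p θ := by
  refine (ENNReal.lt_add_right (by norm_num) ?_).trans_le
    (quarter_add_volume_le_footprint ha hb hx₀ hx hy₀ hy)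
  have hr : (1 : ℝ) / 4 ≤ √2 / 4 := by linarith [Real.one_lt_sqrt_two]
  obtain ⟨B, hB, hBpos⟩ : ∃ B ⊆ (unitSquare p θ ∩ Icc 0 a ×ˢ Icc 0 b) \
      (Ioi p.1 ×ˢ Ioi p.2 ∪ {z | p.2 + 1 / 2 < z.2}), 0 < volume B := by
    rcases hy₀.eq_or_lt with hy₀ | hy₀
    · have hx₀ : 0 < p.1 := hx₀.lt_of_ne fun h => hp (Prod.ext h.symm hy₀.symm)
      set δ := min p.1 (1 / 4)
      have hδ₀ : 0 < δ := lt_min hx₀ (by norm_num)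
      have hδ₁ : δ ≤ p.1 := min_le_left _ _
      have hδ₂ : δ ≤ 1 / 4 := min_le_right _ _
      refine ⟨Icc (p.1 - δ) p.1 ×ˢ Icc p.2 (p.2 + δ), ?_,
        volume_Icc_prod_Icc_pos (by linarith) (by linarith)⟩
      rintro z ⟨⟨h₁, h₂⟩, h₃, h₄⟩
      refine ⟨⟨Icc_prod_Icc_subset_unitSquare (hδ₂.trans hr) ⟨⟨h₁, by linarith⟩, by linarith, h₄⟩,
        ⟨by linarith, by linarith⟩, by linarith, by linarith⟩, ?_⟩
      rintro (⟨h₅, -⟩ | h₅)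
      · exact not_lt.2 h₂ h₅
      · linarith [show p.2 + 1 / 2 < z.2 from h₅]
    · set δ := min p.2 (1 / 4)
      have hδ₀ : 0 < δ := lt_min hy₀ (by norm_num)
      have hδ₁ : δ ≤ p.2 := min_le_left _ _
      have hδ₂ : δ ≤ 1 / 4 := min_le_right _ _
      refine ⟨Icc p.1 (p.1 + δ) ×ˢ Icc (p.2 - δ) p.2, ?_,
        volume_Icc_prod_Icc_pos (by linarith) (by linarith)⟩
      rintro z ⟨⟨h₁, h₂⟩, h₃, h₄⟩
      refine ⟨⟨Icc_prod_Icc_subset_unitSquare (hδ₂.trans hr) ⟨⟨by linarith, h₂⟩, h₃, by linarith⟩,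
        ⟨by linarith, by linarith⟩, by linarith, by linarith⟩, ?_⟩
      rintro (⟨-, h₅⟩ | h₅)
      · exact not_lt.2 h₄ h₅
      · linarith [show p.2 + 1 / 2 < z.2 from h₅]
  exact (hBpos.trans_le (measure_mono hB)).ne'

lemma quarter_lt_footprint_of_inner (ha : 1 ≤ a) (hyx : p.2 ≤ p.1) (hx : p.1 ≤ a / 2)
    (hy : 1 - √2 / 2 < p.2) (hyb : p.2 ≤ b / 2) : 1 / 4 < footprint a b p θ := by
  set r := 1 - √2 / 2 with hr_def
  have hr₀ : 1 / 4 < r := by linarith [Real.sqrt_two_lt_three_halves]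
  have hr : r ≤ √2 / 4 := by
    rw [hr_def]
    nlinarith [Real.sq_sqrt (zero_le_two : (0 : ℝ) ≤ 2), Real.sqrt_nonneg 2]
  have hbox : Icc (p.1 - r) (p.1 + r) ×ˢ Icc (p.2 - r) (p.2 + r) ⊆
      unitSquare p θ ∩ Icc 0 a ×ˢ Icc 0 b := fun z hz =>
    ⟨Icc_prod_Icc_subset_unitSquare hr hz, ⟨by linarith [hz.1.1], by linarith [hz.1.2]⟩,
      by linarith [hz.2.1], by linarith [hz.2.2]⟩
  calc (1 / 4 : ℝ≥0∞) = ENNReal.ofReal (1 / 4) := by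
        rw [ENNReal.ofReal_div_of_pos four_pos, ENNReal.ofReal_one, ENNReal.ofReal_ofNat]
    _ < ENNReal.ofReal (2 * r) * ENNReal.ofReal (2 * r) := by
        rw [← ENNReal.ofReal_mul (by linarith), ENNReal.ofReal_lt_ofReal_iff (by nlinarith)]
        nlinarith
    _ = volume (Icc (p.1 - r) (p.1 + r) ×ˢ Icc (p.2 - r) (p.2 + r)) := by
        rw [volume_Icc_prod_Icc]; ring_nf
    _ ≤ footprint a b p θ := measure_mono hbox

lemma footprint_zero (ha : 1 ≤ a) (hb : 1 ≤ b) : footprint a b 0 θ = 1 / 4 := by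
  refine le_antisymm ?_ (le_self_add.trans (quarter_add_volume_le_footprint ha hb le_rfl
    (by rw [Prod.fst_zero]; linarith) le_rfl
    (by rw [Prod.snd_zero]; linarith [Real.sqrt_two_lt_three_halves])))
  rw [← volume_unitSquare_inter_Ici_prod_Ici 0 θ]
  exact measure_mono
    (inter_subset_inter_right _ (prod_mono Icc_subset_Ici_self Icc_subset_Ici_self))

lemma quarter_le_footprint_and_eq_iff_of_le_half (ha : 1 ≤ a) (hb : 1 ≤ b) (hy₀ : 0 ≤ p.2)
    (hyx : p.2 ≤ p.1) (hx : p.1 ≤ a / 2) (hy : p.2 ≤ b / 2) :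
    1 / 4 ≤ footprint a b p θ ∧
      (footprint a b p θ = 1 / 4 ↔ (p.1 = 0 ∨ p.1 = a) ∧ (p.2 = 0 ∨ p.2 = b)) := by
  rcases eq_or_ne p 0 with rfl | hp
  · simp [footprint_zero ha hb]
  have hlt : 1 / 4 < footprint a b p θ := by
    rcases le_or_gt p.2 (1 - √2 / 2) with hy' | hy'
    · exact quarter_lt_footprint_of_near_bottom ha hb (hy₀.trans hyx) hx hy₀ hy' hp
    · exact quarter_lt_footprint_of_inner ha hyx hx hy' hy
  refine ⟨hlt.le, iff_of_false hlt.ne' ?_⟩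
  rintro ⟨hx' | hx', hy' | hy'⟩
  · exact hp (Prod.ext hx' hy')
  all_goals linarith

end

/-- For a square laptop on a table `T = [0,a] × [0,b]` with `a, b ≥ 1`, the footprint area
is always at least `1/4`, with equality exactly when the center of the laptop is at a
corner of the table — for every orientation `θ`. -/
theorem main_theorem_square (a b : ℝ) (ha : 1 ≤ a) (hb : 1 ≤ b)
    (p : ℝ × ℝ) (hp : p ∈ Set.Icc (0 : ℝ) a ×ˢ Set.Icc (0 : ℝ) b) (θ : ℝ) :
    volume (unitSquare p θ ∩ Set.Icc (0 : ℝ) a ×ˢ Set.Icc (0 : ℝ) b) ≥ 1 / 4 ∧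
      (volume (unitSquare p θ ∩ Set.Icc (0 : ℝ) a ×ˢ Set.Icc (0 : ℝ) b) = 1 / 4 ↔
        (p.1 = 0 ∨ p.1 = a) ∧ (p.2 = 0 ∨ p.2 = b)) := by
  obtain ⟨x, y⟩ := p
  obtain ⟨⟨hx₀, hxa⟩, hy₀, hyb⟩ : (0 ≤ x ∧ x ≤ a) ∧ 0 ≤ y ∧ y ≤ b := hp
  change 1 / 4 ≤ footprint a b (x, y) θ ∧
    (footprint a b (x, y) θ = 1 / 4 ↔ (x = 0 ∨ x = a) ∧ (y = 0 ∨ y = b))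
  wlog hx : x ≤ a / 2 generalizing x θ
  · have h := this (π - θ) (a - x) (by linarith) (by linarith) (by linarith)
    rwa [footprint_reflect_fst, sub_eq_zero, eq_comm (a := a), sub_eq_self,
      or_comm (a := x = a)] at h
  wlog hy : y ≤ b / 2 generalizing y θ
  · have h := this (b - y) (by linarith) (by linarith) (-θ) (by linarith)
    rwa [footprint_reflect_snd, sub_eq_zero, eq_comm (a := b), sub_eq_self,
      or_comm (a := y = b)] at h
  wlog hyx : y ≤ x generalizing a b x y θ
  · have h := this b a hb ha y hy₀ hyb hy x hx₀ hxa (π / 2 - θ) hx (by linarith)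
    rwa [footprint_swap, and_comm (a := y = 0 ∨ y = b)] at h
  exact quarter_le_footprint_and_eq_iff_of_le_half (p := (x, y)) ha hb hy₀ hyx hx hy
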